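/- arXiv:2508.08929 — 6 statements merged into one kernel-verified Lean document; each statement's English description precedes it below -/
import Mathlib

section
/- Let c₀, c₁, a₀, a₁, u₀, u₁, n be integers satisfying a₁·u₀ + (a₀ − c₁·a₁)·u₁ = −1 and n = a₀·u₀ − c₀·a₁·u₁. Then (a₀² − c₁·a₀·a₁ + c₀·a₁²)·(u₀² − c₁·u₀·u₁ + c₀·u₁²) = n² + c₁·n + c₀. -/
/-- Correctness identity for the quadratic factorisation algorithm:
if `a₁·u₀ + (a₀ − c₁·a₁)·u₁ = −1` and `n = a₀·u₀ − c₀·a₁·u₁`, then the product of the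
two norm forms equals `n² + c₁·n + c₀`. -/
theorem quadratic_norm_identity (c₀ c₁ a₀ a₁ u₀ u₁ n : ℤ)
    (h₁ : a₁ * u₀ + (a₀ - c₁ * a₁) * u₁ = -1)
    (h₂ : n = a₀ * u₀ - c₀ * a₁ * u₁) :
    (a₀ ^ 2 - c₁ * a₀ * a₁ + c₀ * a₁ ^ 2) * (u₀ ^ 2 - c₁ * u₀ * u₁ + c₀ * u₁ ^ 2)
      = n ^ 2 + c₁ * n + c₀ := by
  subst h₂
  linear_combination (-c₁*(a₀*u₀-c₀*a₁*u₁) + c₀*(a₁*u₀+(a₀-c₁*a₁)*u₁-1)) * h₁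
end

section
/- For all real numbers β and γ and every ε > 0, there exist integers a, b, c, d with b ≠ 0, c ≠ 0, d ≠ 0 such that a·d − b·c = 1, |a/b − γ| < ε, |c/d − γ| < ε, |a/c − β| < ε, and |b/d − β| < ε. -/
/-!
Take `X = [[m, m'], [n, n']]` and `Y = [[p, q], [p₀, q₀]]` in `SL₂(ℤ)` with positive `n, n', q, q₀`,
both columns of `X` of ratio close to `β`, both rows of `Y` of ratio close to `γ`, and
`m m' > 0`, `p p₀ > 0`. Each row of `XY` is a combination of the rows of `Y` with coefficients of
one sign, so its ratio is a weighted mediant of `p/q` and `p₀/q₀` and stays close to `γ`; dually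
each column of `XY` is a same-sign combination of the columns of `X`. Such a `Y` comes from a
nonzero rational `p/q` near `γ` completed to a unimodular matrix by a Bézout row with `q₀` large,
since then `p₀/q₀ = p/q - 1/(q q₀)`.
-/

section
variable {R : Type*} [Ring R] [LinearOrder R] [IsStrictOrderedRing R] {a b : R}

theorem add_ne_zero_of_mul_pos (h : 0 < a * b) : a + b ≠ 0 := by
  rcases pos_and_pos_or_neg_and_neg_of_mul_pos h with ⟨ha, hb⟩ | ⟨ha, hb⟩
  · exact (add_pos ha hb).ne'
  · exact (add_neg ha hb).ne

theorem abs_add_eq_of_mul_pos (h : 0 < a * b) : |a + b| = |a| + |b| := by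
  rcases pos_and_pos_or_neg_and_neg_of_mul_pos h with ⟨ha, hb⟩ | ⟨ha, hb⟩
  · exact (abs_add_eq_add_abs_iff _ _).2 (.inl ⟨ha.le, hb.le⟩)
  · exact (abs_add_eq_add_abs_iff _ _).2 (.inr ⟨ha.le, hb.le⟩)

end

section
variable {K : Type*} [Field K] [LinearOrder K] [IsStrictOrderedRing K]

theorem abs_div_sub_eq_abs_sub_mul_div {x y : K} (t : K) (hy : y ≠ 0) : |x / y - t| = |x - t * y| / |y| := by
  rw [← abs_div, sub_div, mul_div_cancel_right₀ _ hy]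

theorem abs_mediant_sub_lt {x₁ x₂ y₁ y₂ t ε : K} (hy : 0 < y₁ * y₂)
    (h₁ : |x₁ / y₁ - t| < ε) (h₂ : |x₂ / y₂ - t| < ε) :
    |(x₁ + x₂) / (y₁ + y₂) - t| < ε := by
  have hy₁ : y₁ ≠ 0 := left_ne_zero_of_mul hy.ne'
  have hy₂ : y₂ ≠ 0 := right_ne_zero_of_mul hy.ne'
  rw [abs_div_sub_eq_abs_sub_mul_div t hy₁, div_lt_iff₀ (abs_pos.2 hy₁)] at h₁
  rw [abs_div_sub_eq_abs_sub_mul_div t hy₂, div_lt_iff₀ (abs_pos.2 hy₂)] at h₂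
  have hy₁₂ := add_ne_zero_of_mul_pos hy
  rw [abs_div_sub_eq_abs_sub_mul_div t hy₁₂, div_lt_iff₀ (abs_pos.2 hy₁₂), abs_add_eq_of_mul_pos hy]
  calc |x₁ + x₂ - t * (y₁ + y₂)| = |(x₁ - t * y₁) + (x₂ - t * y₂)| := by ring_nf
    _ ≤ |x₁ - t * y₁| + |x₂ - t * y₂| := abs_add_le _ _
    _ < ε * (|y₁| + |y₂|) := by linarith

theorem abs_weighted_mediant_sub_lt {s₁ s₂ x₁ x₂ y₁ y₂ t ε : K} (hs : 0 < s₁ * s₂)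
    (hy : 0 < y₁ * y₂) (h₁ : |x₁ / y₁ - t| < ε) (h₂ : |x₂ / y₂ - t| < ε) :
    |(s₁ * x₁ + s₂ * x₂) / (s₁ * y₁ + s₂ * y₂) - t| < ε := by
  refine abs_mediant_sub_lt (by rw [mul_mul_mul_comm]; exact mul_pos hs hy) ?_ ?_
  · rwa [mul_div_mul_left _ _ (left_ne_zero_of_mul hs.ne')]
  · rwa [mul_div_mul_left _ _ (right_ne_zero_of_mul hs.ne')]

end

theorem exists_rat_ne_zero_abs_sub_lt (x : ℝ) {δ : ℝ} (hδ : 0 < δ) :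
    ∃ r : ℚ, r ≠ 0 ∧ |(r : ℝ) - x| < δ := by
  obtain ⟨_, ⟨⟨r, rfl⟩, hr0⟩, hr⟩ := (Rat.denseRange_cast.sdiff_singleton 0).exists_mem_open
    Metric.isOpen_ball ⟨x, Metric.mem_ball_self hδ⟩
  exact ⟨r, by rintro rfl; simp at hr0, by rwa [Metric.mem_ball, Real.dist_eq] at hr⟩

theorem IsCoprime.exists_mul_sub_mul_eq_one_le {p q : ℤ} (h : IsCoprime p q) (hq : 0 < q)
    (N : ℤ) : ∃ p₀ q₀ : ℤ, p * q₀ - q * p₀ = 1 ∧ N ≤ q₀ := by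
  obtain ⟨u, v, huv⟩ := h
  refine ⟨-v + (|N| + |u|) * p, u + (|N| + |u|) * q, by linear_combination huv, ?_⟩
  nlinarith [le_abs_self N, neg_abs_le u, abs_nonneg N, abs_nonneg u]

theorem mul_pos_of_mul_sub_mul_eq_one {p q p₀ q₀ : ℤ} (h : p * q₀ - q * p₀ = 1) (hp : p ≠ 0)
    (hq : 0 < q) (hq₀ : 2 ≤ q₀) : 0 < p * p₀ := by
  rcases hp.lt_or_gt with hp | hp
  · have : q * p₀ < 0 := by nlinarith
    exact mul_pos_of_neg_of_neg hp (neg_of_mul_neg_right this hq.le)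
  · have : 0 < q * p₀ := by nlinarith
    exact mul_pos hp (pos_of_mul_pos_right this hq.le)

theorem exists_mul_sub_mul_eq_one_abs_div_sub_lt (x : ℝ) {δ : ℝ} (hδ : 0 < δ) :
    ∃ p q p₀ q₀ : ℤ, p * q₀ - q * p₀ = 1 ∧ 0 < q ∧ 0 < q₀ ∧ 0 < p * p₀ ∧
      |(p : ℝ) / q - x| < δ ∧ |(p₀ : ℝ) / q₀ - x| < δ := by
  obtain ⟨r, hr0, hr⟩ := exists_rat_ne_zero_abs_sub_lt x (half_pos hδ)
  obtain ⟨N, hN⟩ := exists_int_gt (2 / δ)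
  have hq : (0 : ℤ) < r.den := mod_cast r.den_pos
  obtain ⟨p₀, q₀, hdet, hq₀⟩ :=
    (Rat.isCoprime_num_den r).exists_mul_sub_mul_eq_one_le hq (max N 2)
  have hq₀N : (2 / δ : ℝ) < q₀ := hN.trans_le (mod_cast (le_max_left _ _).trans hq₀)
  have hq₀2 : 2 ≤ q₀ := (le_max_right _ _).trans hq₀
  have hq₀0 : (0 : ℝ) < q₀ := by positivity
  have hr_eq : (r : ℝ) = r.num / ((r.den : ℤ) : ℝ) := by rw [Int.cast_natCast, Rat.cast_def]
  refine ⟨r.num, r.den, p₀, q₀, hdet, hq, by omega,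
    mul_pos_of_mul_sub_mul_eq_one hdet (Rat.num_ne_zero.2 hr0) hq hq₀2, ?_, ?_⟩
  · rw [← hr_eq]; linarith
  · have hgap : (r : ℝ) - p₀ / q₀ = 1 / (((r.den : ℤ) : ℝ) * q₀) := by
      rw [hr_eq, div_sub_div _ _ (by positivity) hq₀0.ne']
      exact_mod_cast congrArg (fun z : ℤ => (z : ℝ) / (((r.den : ℤ) : ℝ) * q₀)) hdet
    have hsmall : 1 / (((r.den : ℤ) : ℝ) * q₀) < δ / 2 := by
      rw [div_lt_iff₀ (by positivity)]
      rw [div_lt_iff₀ hδ] at hq₀N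
      nlinarith [(mod_cast hq : (1 : ℝ) ≤ ((r.den : ℤ) : ℝ))]
    calc |(p₀ : ℝ) / q₀ - x| ≤ |(p₀ : ℝ) / q₀ - r| + |(r : ℝ) - x| := abs_sub_le _ _ _
      _ < δ / 2 + δ / 2 := by
        rw [abs_sub_comm, hgap, abs_of_pos (by positivity)]
        gcongr
      _ = δ := add_halves δ

/-- Elements of `SL₂(ℤ)` can be found whose row ratios approximate `γ`
and whose column ratios approximate `β` to any prescribed accuracy. -/
theorem SL2_row_column_ratio_approx (β γ : ℝ) (ε : ℝ) (hε : 0 < ε) :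
    ∃ a b c d : ℤ, b ≠ 0 ∧ c ≠ 0 ∧ d ≠ 0 ∧ a * d - b * c = 1 ∧
      |(a : ℝ) / (b : ℝ) - γ| < ε ∧ |(c : ℝ) / (d : ℝ) - γ| < ε ∧
      |(a : ℝ) / (c : ℝ) - β| < ε ∧ |(b : ℝ) / (d : ℝ) - β| < ε := by
  obtain ⟨m, n, m', n', hX, hn, hn', hmm', hm, hm'⟩ :=
    exists_mul_sub_mul_eq_one_abs_div_sub_lt β hε
  obtain ⟨p, q, p₀, q₀, hY, hq, hq₀, hpp₀, hp, hp₀⟩ :=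
    exists_mul_sub_mul_eq_one_abs_div_sub_lt γ hε
  have hnn' : 0 < n * n' := mul_pos hn hn'
  have hqq₀ : 0 < q * q₀ := mul_pos hq hq₀
  refine ⟨m * p + m' * p₀, m * q + m' * q₀, n * p + n' * p₀, n * q + n' * q₀,
    add_ne_zero_of_mul_pos ?_, add_ne_zero_of_mul_pos ?_, add_ne_zero_of_mul_pos ?_,
    by linear_combination (p * q₀ - q * p₀) * hX + hY, ?_, ?_, ?_, ?_⟩
  · rw [mul_mul_mul_comm]; exact mul_pos hmm' hqq₀
  · rw [mul_mul_mul_comm]; exact mul_pos hnn' hpp₀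
  · rw [mul_mul_mul_comm]; exact mul_pos hnn' hqq₀
  all_goals push_cast
  · exact abs_weighted_mediant_sub_lt (mod_cast hmm') (mod_cast hqq₀) hp hp₀
  · exact abs_weighted_mediant_sub_lt (mod_cast hnn') (mod_cast hqq₀) hp hp₀
  · rw [mul_comm (m : ℝ), mul_comm (m' : ℝ), mul_comm (n : ℝ), mul_comm (n' : ℝ)]
    exact abs_weighted_mediant_sub_lt (mod_cast hpp₀) (mod_cast hnn') hm hm'
  · rw [mul_comm (m : ℝ), mul_comm (m' : ℝ), mul_comm (n : ℝ), mul_comm (n' : ℝ)]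
    exact abs_weighted_mediant_sub_lt (mod_cast hqq₀) (mod_cast hnn') hm hm'
end

section
/- Let q be a positive integer and c₀, c₁ ∈ ℤ, and let P(x) = q·x² + c₁·x + c₀. Then for every real number β and every ε > 0 there exist integers n, d₁, d₂ with d₂ ≠ 0 such that P(n) = d₁·d₂ and |n/d₂ + β| < ε. -/
/-!
Homogenising `P` at a point `W / S` gives `V = S² P(W / S)`, and when `V` is coprime to `S`
the residue `n ≡ W / S (mod V)` is a root of `P` modulo `V`, so `V ∣ P(n)`. Writing
`S n = G V + W` we get `n / V = G / S + W / (S V)`. Take `S` a large prime and `G ≈ -β S` prime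
to `S`; then `W ≡ -(q G)⁻¹ (mod S)` makes `S ∣ G V + W` and keeps `V` prime to `S`, and taking
`W` large makes `V ≥ S W`, so `W / (S V)` is negligible and `n / V ≈ G / S ≈ -β`.
-/

/-- `y² P(x / y)` for `P(t) = q t² + c₁ t + c₀`. -/
def quadForm {R : Type*} [CommRing R] (q c₁ c₀ x y : R) : R :=
  q * x ^ 2 + c₁ * x * y + c₀ * y ^ 2

section CommRing

variable {R : Type*} [CommRing R] {q c₁ c₀ S W G : R}

theorem isCoprime_quadForm_of_dvd (h : S ∣ q * G * W + 1) :
    IsCoprime (quadForm q c₁ c₀ W S) S := by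
  obtain ⟨t, ht⟩ := h
  have hqW : IsCoprime (q * W) S := ⟨-G, t, by linear_combination -ht⟩
  have key := (hqW.mul_left hqW.of_mul_left_right).add_mul_left_left (c₁ * W + c₀ * S)
  convert key using 1
  unfold quadForm
  ring

theorem dvd_mul_quadForm_add_of_dvd (h : S ∣ q * G * W + 1) :
    S ∣ G * quadForm q c₁ c₀ W S + W := by
  obtain ⟨t, ht⟩ := h
  exact ⟨W * t + G * (c₁ * W + c₀ * S), by unfold quadForm; linear_combination W * ht⟩

theorem quadForm_dvd_of_mul_eq {n : R} (hcop : IsCoprime (quadForm q c₁ c₀ W S) S)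
    (hn : S * n = G * quadForm q c₁ c₀ W S + W) :
    quadForm q c₁ c₀ W S ∣ q * n ^ 2 + c₁ * n + c₀ := by
  -- `S n ≡ W (mod V)`, so `S² P(n) = quadForm (S n) S ≡ quadForm W S = V`.
  refine (hcop.pow_right (n := 2)).dvd_of_dvd_mul_left
    ⟨1 + G * (q * G * quadForm q c₁ c₀ W S + 2 * q * W + c₁ * S), ?_⟩
  have hV : quadForm q c₁ c₀ W S = q * W ^ 2 + c₁ * W * S + c₀ * S ^ 2 := rfl
  linear_combination (q * (S * n + G * quadForm q c₁ c₀ W S + W) + c₁ * S) * hn - hV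

end CommRing

theorem mul_le_quadForm {q c₁ c₀ S W : ℤ} (hq : 0 < q) (hS : 0 < S)
    (hW : (|c₁| + |c₀| + 1) * S ≤ W) : S * W ≤ quadForm q c₁ c₀ W S := by
  have hSW : S ≤ W := by nlinarith [abs_nonneg c₁, abs_nonneg c₀]
  have hW0 : 0 ≤ W := hS.le.trans hSW
  have h₁ : -(|c₁| * (W * S)) ≤ c₁ * W * S := by
    nlinarith [neg_abs_le c₁, mul_nonneg hW0 hS.le]
  have h₀ : -(|c₀| * (S * W)) ≤ c₀ * S ^ 2 := by
    nlinarith [neg_abs_le c₀, abs_nonneg c₀, mul_le_mul_of_nonneg_left hSW hS.le]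
  have hq' : W ^ 2 ≤ q * W ^ 2 := le_mul_of_one_le_left (sq_nonneg W) hq
  unfold quadForm
  nlinarith [mul_le_mul_of_nonneg_left hW hW0]

theorem exists_le_dvd_mul_add_one {a S : ℤ} (hcop : IsCoprime a S) (hS : 0 < S) (B : ℤ) :
    ∃ W, B ≤ W ∧ S ∣ a * W + 1 := by
  obtain ⟨u, v, huv⟩ := hcop
  refine ⟨-u + (|u| + |B|) * S, ?_, ⟨v + a * (|u| + |B|), by linear_combination -huv⟩⟩
  nlinarith [le_abs_self u, le_abs_self B, abs_nonneg u, abs_nonneg B]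

theorem exists_not_dvd_abs_sub_le_one {S : ℤ} (hS : ¬IsUnit S) (y : ℝ) :
    ∃ G : ℤ, ¬S ∣ G ∧ |(G : ℝ) - y| ≤ 1 := by
  have h₁ := Int.floor_le y
  have h₂ := Int.lt_floor_add_one y
  by_cases hdvd : S ∣ ⌊y⌋
  · refine ⟨⌊y⌋ + 1, fun h ↦ hS (isUnit_of_dvd_one ?_), ?_⟩
    · simpa using (Int.dvd_add_right hdvd).mp h
    · rw [abs_le]; push_cast; constructor <;> linarith
  · exact ⟨⌊y⌋, hdvd, by rw [abs_le]; constructor <;> linarith⟩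

theorem abs_div_sub_le_of_mul_eq {n V G W S γ : ℝ} (hS : 0 < S) (hV : V ≠ 0)
    (hWV : |W| ≤ |V|) (hn : S * n = G * V + W) (hG : |G - γ * S| ≤ 1) :
    |n / V - γ| ≤ 2 / S := by
  have hsplit : n / V - γ = (G - γ * S) / S + W / (S * V) := by
    rw [eq_div_of_mul_eq hS.ne' ((mul_comm n S).trans hn)]
    field_simp
    ring
  have hW : |W / (S * V)| ≤ 1 / S := by
    rw [abs_div, abs_mul, abs_of_pos hS, div_le_div_iff₀ (by positivity) hS]
    nlinarith
  calc |n / V - γ| ≤ |(G - γ * S) / S| + |W / (S * V)| := hsplit ▸ abs_add_le _ _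
    _ ≤ 1 / S + 1 / S := by
        gcongr
        rw [abs_div, abs_of_pos hS]
        gcongr
    _ = 2 / S := by ring

/-- Let `q` be a positive integer, `c₀ c₁ ∈ ℤ` and
`P(x) = q·x² + c₁·x + c₀`. For every real `β` and every `ε > 0` there exist integers
`n, d₁, d₂` with `d₂ ≠ 0` such that `P(n) = d₁·d₂` and `|n/d₂ + β| < ε`. -/
theorem nonmonic_quadratic_ratio (q : ℕ) (hq : 0 < q) (c₀ c₁ : ℤ)
    (β : ℝ) (ε : ℝ) (hε : 0 < ε) :
    ∃ n d₁ d₂ : ℤ, d₂ ≠ 0 ∧ (q : ℤ) * n ^ 2 + c₁ * n + c₀ = d₁ * d₂ ∧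
      |(n : ℝ) / (d₂ : ℝ) + β| < ε := by
  obtain ⟨p, hpN, hp⟩ := Nat.exists_infinite_primes (max (q + 1) (⌈2 / ε⌉₊ + 1))
  have hS : Prime (p : ℤ) := Nat.prime_iff_prime_int.mp hp
  have hS0 : (0 : ℤ) < p := by exact_mod_cast hp.pos
  have hSq : ¬(p : ℤ) ∣ q := fun h ↦ by
    have := Int.le_of_dvd (by exact_mod_cast hq) h
    omega
  obtain ⟨G, hSG, hG⟩ := exists_not_dvd_abs_sub_le_one hS.not_isUnit (-β * p)
  have hqG : IsCoprime ((q : ℤ) * G) p :=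
    ((hS.coprime_iff_not_dvd.mpr hSq).mul_right (hS.coprime_iff_not_dvd.mpr hSG)).symm
  obtain ⟨W, hW, hSW⟩ := exists_le_dvd_mul_add_one hqG hS0 ((|c₁| + |c₀| + 1) * p)
  have hV := mul_le_quadForm (Int.natCast_pos.mpr hq) hS0 hW
  obtain ⟨n, hn⟩ := dvd_mul_quadForm_add_of_dvd (c₁ := c₁) (c₀ := c₀) hSW
  obtain ⟨d₁, hd₁⟩ := quadForm_dvd_of_mul_eq (isCoprime_quadForm_of_dvd hSW) hn.symm
  set V := quadForm (q : ℤ) c₁ c₀ W p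
  have hW0 : 0 < W := by nlinarith [abs_nonneg c₁, abs_nonneg c₀]
  have hWV : W ≤ V := le_trans (le_mul_of_one_le_left hW0.le hS0) hV
  refine ⟨n, d₁, V, by omega, hd₁.trans (mul_comm _ _), ?_⟩
  have hp' : (0 : ℝ) < p := by exact_mod_cast hp.pos
  have h2p : 2 / (p : ℝ) < ε := by
    have : (⌈2 / ε⌉₊ : ℝ) + 1 ≤ p := by exact_mod_cast (le_max_right _ _).trans hpN
    rw [div_lt_iff₀ hp', mul_comm, ← div_lt_iff₀ hε]
    linarith [Nat.le_ceil (2 / ε)]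
  have hn' : (p : ℝ) * n = G * V + W := by exact_mod_cast hn.symm
  have hest := abs_div_sub_le_of_mul_eq hp' (by exact_mod_cast (by omega : V ≠ 0))
    (by exact_mod_cast abs_le_abs_of_nonneg hW0.le hWV) hn' hG
  exact (sub_neg_eq_add _ β ▸ hest).trans_lt h2p
end

section
/- Let c₀, c₁, c₂, x, y, a₀, a₁, a₂ be integers and set A = y − c₂·x, B = −c₂·(y − c₂·x), C = c₁·y − (c₁·c₂ − c₀)·x. Assume a₀·(x·a₁ − y·a₂) + A·a₁² + B·a₁·a₂ + C·a₂² = 1. Define u₀ = −(a₀ − c₂·a₁ + (c₂² − c₁)·a₂)·x − (a₁ − c₂·a₂)·y, u₁ = a₂·y, u₂ = a₂·x, and n = a₀·u₀ − c₀·a₂·u₁ + c₀·(c₂·a₂ − a₁)·u₂. Let N(a, b, c) = a³ − c₂·a²·b + (c₂² − 2c₁)·a²·c + c₁·a·b² + (3c₀ − c₁·c₂)·a·b·c + (c₁² − 2c₀·c₂)·a·c² − c₀·b³ + c₀·c₂·b²·c − c₀·c₁·b·c² + c₀²·c³. Then N(a₀, a₁, a₂) · N(u₀, u₁, u₂) =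 n³ + c₂·n² + c₁·n + c₀. -/
/-- Correctness identity for the cubic factorisation algorithm:
the product of the norm forms of `a₀ + a₁x + a₂x²` and `u₀ + u₁x + u₂x²` equals
`P(n) = n³ + c₂n² + c₁n + c₀`. -/
theorem cubic_norm_identity (c₀ c₁ c₂ x y a₀ a₁ a₂ : ℤ)
    (A B C : ℤ) (hA : A = y - c₂ * x) (hB : B = -c₂ * (y - c₂ * x))
    (hC : C = c₁ * y - (c₁ * c₂ - c₀) * x)
    (hsol : a₀ * (x * a₁ - y * a₂) + A * a₁ ^ 2 + B * a₁ * a₂ + C * a₂ ^ 2 = 1)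
    (u₀ u₁ u₂ n : ℤ)
    (hu₀ : u₀ = -(a₀ - c₂ * a₁ + (c₂ ^ 2 - c₁) * a₂) * x - (a₁ - c₂ * a₂) * y)
    (hu₁ : u₁ = a₂ * y) (hu₂ : u₂ = a₂ * x)
    (hn : n = a₀ * u₀ - c₀ * a₂ * u₁ + c₀ * (c₂ * a₂ - a₁) * u₂)
    (N : ℤ → ℤ → ℤ → ℤ)
    (hN : ∀ a b c : ℤ, N a b c =
      a ^ 3 - c₂ * a ^ 2 * b + (c₂ ^ 2 - 2 * c₁) * a ^ 2 * c + c₁ * a * b ^ 2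
      + (3 * c₀ - c₁ * c₂) * a * b * c + (c₁ ^ 2 - 2 * c₀ * c₂) * a * c ^ 2
      - c₀ * b ^ 3 + c₀ * c₂ * b ^ 2 * c - c₀ * c₁ * b * c ^ 2 + c₀ ^ 2 * c ^ 3) :
    N a₀ a₁ a₂ * N u₀ u₁ u₂ = n ^ 3 + c₂ * n ^ 2 + c₁ * n + c₀ := by
  subst hA hB hC hu₀ hu₁ hu₂ hn
  rw [hN, hN]
  linear_combination ((1*c₂*y^2*a₀^2*a₁^2) + (2*c₂*x*y*a₀^3*a₁) + (1*c₂*x^2*a₀^4) + (-2*c₂^2*y^2*a₀^2*a₁*a₂) + (-2*c₂^2*x*y*a₀^2*a₁^2) + (-2*c₂^2*x*y*a₀^3*a₂) + (-2*c₂^2*x^2*a₀^3*a₁) + (1*c₂^3*y^2*a₀^2*a₂^2) + (4*c₂^3*x*y*a₀^2*a₁*a₂) + (1*c₂^3*x^2*a₀^2*a₁^2) + (2*c₂^3*x^2*a₀^3*a₂) + (-2*c₂^4*x*y*a₀^2*a₂^2) + (-2*c₂^4*x^2*a₀^2*a₁*a₂) + (1*c₂^5*x^2*a₀^2*a₂^2)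 + (-1*c₁*y*a₀*a₁) + (-1*c₁*y^2*a₀*a₁^3) + (1*c₁*y^2*a₀^2*a₁*a₂) + (-1*c₁*x*a₀^2) + (-2*c₁*x*y*a₀^2*a₁^2) + (1*c₁*x*y*a₀^3*a₂) + (-1*c₁*x^2*a₀^3*a₁) + (1*c₁*c₂*y*a₀*a₂) + (2*c₁*c₂*y^2*a₀*a₁^2*a₂) + (-1*c₁*c₂*y^2*a₀^2*a₂^2) + (1*c₁*c₂*x*a₀*a₁) + (2*c₁*c₂*x*y*a₀*a₁^3) + (-1*c₁*c₂*x*y*a₀^2*a₁*a₂) + (2*c₁*c₂*x^2*a₀^2*a₁^2) + (-2*c₁*c₂*x^2*a₀^3*a₂) + (-1*c₁*c₂^2*y^2*a₀*a₁*a₂^2) + (-1*c₁*c₂^2*x*a₀*a₂) + (-4*c₁*c₂^2*x*y*a₀*a₁^2*a₂) + (3*c₁*c₂^2*x*y*a₀^2*a₂^2) + (-1*c₁*c₂^2*x^2*a₀*a₁^3) + (2*c₁*c₂^3*x*y*a₀*a₁*a₂^2) + (2*c₁*c₂^3*x^2*a₀*a₁^2*a₂) + (-2*c₁*c₂^3*x^2*a₀^2*a₂^2)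 + (-1*c₁*c₂^4*x^2*a₀*a₁*a₂^2) + (-1*c₁^2*y^2*a₀*a₁*a₂^2) + (1*c₁^2*x*a₀*a₂) + (1*c₁^2*x*y*a₀*a₁^2*a₂) + (-2*c₁^2*x*y*a₀^2*a₂^2) + (1*c₁^2*x^2*a₀^2*a₁*a₂) + (1*c₁^2*c₂*y^2*a₀*a₂^3) + (1*c₁^2*c₂*x*y*a₀*a₁*a₂^2) + (-1*c₁^2*c₂*x^2*a₀*a₁^2*a₂) + (2*c₁^2*c₂*x^2*a₀^2*a₂^2) + (-2*c₁^2*c₂^2*x*y*a₀*a₂^3) + (1*c₁^2*c₂^3*x^2*a₀*a₂^3) + (1*c₁^3*x*y*a₀*a₂^3) + (-1*c₁^3*c₂*x^2*a₀*a₂^3) + (1*c₀) + (1*c₀*y*a₁^2) + (-1*c₀*y*a₀*a₂) + (1*c₀*y^2*a₁^4) + (-2*c₀*y^2*a₀*a₁^2*a₂) + (1*c₀*y^2*a₀^2*a₂^2) + (1*c₀*x*a₀*a₁) + (2*c₀*x*y*a₀*a₁^3) + (-2*c₀*x*y*a₀^2*a₁*a₂) + (1*c₀*x^2*a₀^2*a₁^2)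 + (-1*c₀*c₂*y*a₁*a₂) + (-2*c₀*c₂*y^2*a₁^3*a₂) + (4*c₀*c₂*y^2*a₀*a₁*a₂^2) + (-1*c₀*c₂*x*a₁^2) + (-2*c₀*c₂*x*y*a₁^4) + (2*c₀*c₂*x*y*a₀*a₁^2*a₂) + (2*c₀*c₂*x*y*a₀^2*a₂^2) + (-2*c₀*c₂*x^2*a₀*a₁^3) + (2*c₀*c₂*x^2*a₀^2*a₁*a₂) + (1*c₀*c₂^2*y^2*a₁^2*a₂^2) + (-2*c₀*c₂^2*y^2*a₀*a₂^3) + (1*c₀*c₂^2*x*a₁*a₂) + (4*c₀*c₂^2*x*y*a₁^3*a₂) + (-8*c₀*c₂^2*x*y*a₀*a₁*a₂^2) + (1*c₀*c₂^2*x^2*a₁^4) + (-2*c₀*c₂^2*x^2*a₀^2*a₂^2) + (-2*c₀*c₂^3*x*y*a₁^2*a₂^2) + (4*c₀*c₂^3*x*y*a₀*a₂^3) + (-2*c₀*c₂^3*x^2*a₁^3*a₂) + (4*c₀*c₂^3*x^2*a₀*a₁*a₂^2) + (1*c₀*c₂^4*x^2*a₁^2*a₂^2) + (-2*c₀*c₂^4*x^2*a₀*a₂^3)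 + (1*c₀*c₁*y^2*a₁^2*a₂^2) + (-1*c₀*c₁*y^2*a₀*a₂^3) + (-1*c₀*c₁*x*a₁*a₂) + (-1*c₀*c₁*x*y*a₁^3*a₂) + (1*c₀*c₁*x*y*a₀*a₁*a₂^2) + (-1*c₀*c₁*x^2*a₀*a₁^2*a₂) + (-1*c₀*c₁*x^2*a₀^2*a₂^2) + (-1*c₀*c₁*c₂*y^2*a₁*a₂^3) + (-1*c₀*c₁*c₂*x*y*a₁^2*a₂^2) + (1*c₀*c₁*c₂*x^2*a₁^3*a₂) + (-2*c₀*c₁*c₂*x^2*a₀*a₁*a₂^2) + (2*c₀*c₁*c₂^2*x*y*a₁*a₂^3) + (1*c₀*c₁*c₂^2*x^2*a₀*a₂^3) + (-1*c₀*c₁*c₂^3*x^2*a₁*a₂^3) + (-1*c₀*c₁^2*x*y*a₁*a₂^3) + (1*c₀*c₁^2*x^2*a₀*a₂^3) + (1*c₀*c₁^2*c₂*x^2*a₁*a₂^3) + (1*c₀^2*x*a₂^2) + (2*c₀^2*x*y*a₁^2*a₂^2) + (-2*c₀^2*x*y*a₀*a₂^3) + (2*c₀^2*x^2*a₀*a₁*a₂^2)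 + (1*c₀^2*c₂*y^2*a₂^4) + (-1*c₀^2*c₂*x^2*a₁^2*a₂^2) + (-2*c₀^2*c₂^2*x*y*a₂^4) + (1*c₀^2*c₂^3*x^2*a₂^4) + (1*c₀^2*c₁*x*y*a₂^4) + (-1*c₀^2*c₁*x^2*a₁*a₂^3) + (-1*c₀^2*c₁*c₂*x^2*a₂^4) + (1*c₀^3*x^2*a₂^4)) * hsol
end

section
/- For every nonempty finite sequence k₁, …, k_s of positive integers, if M = A_{k₁}·A_{k₂}·⋯·A_{k_s} and Mᵀ·M = [[d₁, n], [n, d₂]], then n² + 1 = d₁·d₂ and 1 ≤ d₁ ≤ n < d₂. -/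
/-!
Since every `A_k` has determinant `-1`, `det (Mᵀ M) = (det M)² = 1`, which is `d₁ d₂ - n² = 1`.
For the inequalities, write `M = [u | v]` by columns. Left multiplication by `A_k` with `k ≥ 1`
preserves the property that `u ≥ 0` with `u₁ ≥ 1`, `u ≤ v` entrywise and `u ≠ v`, and `A_k`
itself has it. Then `d₁ = ‖u‖² ≥ 1`, `n - d₁ = u ⬝ (v - u) ≥ 0` and `d₂ - n = v ⬝ (v - u) > 0`.
-/

open Matrix

/-- `A k` is the 2×2 integer matrix with rows `(0, 1)` and `(1, k)`. -/
def genMat (k : ℤ) : Matrix (Fin 2) (Fin 2) ℤ := !![0, 1; 1, k]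

theorem isUnit_det_genMat (k : ℤ) : IsUnit (genMat k).det := by
  simp [genMat, det_fin_two_of]

theorem isUnit_det_prod_map_genMat (l : List ℤ) : IsUnit (l.map genMat).prod.det := by
  induction l with
  | nil => simp
  | cons k l ih =>
    rw [List.map_cons, List.prod_cons, det_mul]
    exact (isUnit_det_genMat k).mul ih

theorem det_transpose_mul_self {n R : Type*} [Fintype n] [DecidableEq n] [CommRing R]
    (M : Matrix n n R) : (Mᵀ * M).det = M.det ^ 2 := by
  rw [det_mul, det_transpose, sq]

/-- Given `le_top` and `le_bottom`, `sum_lt` says that the two columns differ. -/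
structure IsColumnIncreasing (M : Matrix (Fin 2) (Fin 2) ℤ) : Prop where
  nonneg : 0 ≤ M 0 0
  one_le : 1 ≤ M 1 0
  le_top : M 0 0 ≤ M 0 1
  le_bottom : M 1 0 ≤ M 1 1
  sum_lt : M 0 0 + M 1 0 < M 0 1 + M 1 1

theorem IsColumnIncreasing.of_entries {a b c d : ℤ} (ha : 0 ≤ a) (hc : 1 ≤ c) (hab : a ≤ b)
    (hcd : c ≤ d) (hsum : a + c < b + d) : IsColumnIncreasing !![a, b; c, d] :=
  ⟨ha, hc, hab, hcd, hsum⟩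

theorem isColumnIncreasing_genMat {k : ℤ} (hk : 0 < k) : IsColumnIncreasing (genMat k) :=
  .of_entries le_rfl le_rfl zero_le_one hk (by omega)

theorem genMat_mul (k : ℤ) (M : Matrix (Fin 2) (Fin 2) ℤ) :
    genMat k * M = !![M 1 0, M 1 1; M 0 0 + k * M 1 0, M 0 1 + k * M 1 1] := by
  rw [genMat, eta_fin_two M, mul_fin_two]
  simp

theorem IsColumnIncreasing.genMat_mul {M : Matrix (Fin 2) (Fin 2) ℤ} (hM : IsColumnIncreasing M)
    {k : ℤ} (hk : 0 < k) : IsColumnIncreasing (genMat k * M) := by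
  obtain ⟨h₀, h₁, h₂, h₃, h₄⟩ := hM
  rw [_root_.genMat_mul]
  exact .of_entries (by omega) (by nlinarith) h₃ (by nlinarith) (by nlinarith)

theorem isColumnIncreasing_prod_map_genMat {l : List ℤ} (hne : l ≠ [])
    (hpos : ∀ k ∈ l, 0 < k) : IsColumnIncreasing (l.map genMat).prod := by
  induction l with
  | nil => exact absurd rfl hne
  | cons k l ih =>
    have hk : 0 < k := hpos k List.mem_cons_self
    rcases eq_or_ne l [] with rfl | hl
    · simpa using isColumnIncreasing_genMat hk
    · rw [List.map_cons, List.prod_cons]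
      exact (ih hl fun x hx => hpos x (List.mem_cons_of_mem k hx)).genMat_mul hk

theorem IsColumnIncreasing.gram_bounds {M : Matrix (Fin 2) (Fin 2) ℤ}
    (hM : IsColumnIncreasing M) :
    1 ≤ (Mᵀ * M) 0 0 ∧ (Mᵀ * M) 0 0 ≤ (Mᵀ * M) 0 1 ∧ (Mᵀ * M) 0 1 < (Mᵀ * M) 1 1 := by
  obtain ⟨h₀, h₁, h₂, h₃, h₄⟩ := hM
  simp only [mul_apply, transpose_apply, Fin.sum_univ_two]
  have h₅ : 1 ≤ (M 0 1 - M 0 0) + (M 1 1 - M 1 0) := by omega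
  refine ⟨by nlinarith, by nlinarith, ?_⟩
  -- With `w = v - u ≥ 0`: `v ⬝ w = u ⬝ w + ‖w‖² ≥ w₁ + w₀²`, positive as `w₀ + w₁ ≥ 1`.
  nlinarith [mul_nonneg h₀ (sub_nonneg.2 h₂), mul_nonneg (sub_nonneg.2 h₁) (sub_nonneg.2 h₃),
    sq_nonneg (2 * (M 0 1 - M 0 0) - 1)]

/-- For every nonempty finite product `M = A_{k₁}·⋯·A_{k_s}` of the
generators with positive parameters, if `Mᵀ·M = [[d₁, n], [n, d₂]]` then
`n² + 1 = d₁·d₂` and `1 ≤ d₁ ≤ n < d₂`. -/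
theorem product_gives_factorisation (l : List ℤ) (hne : l ≠ [])
    (hpos : ∀ k ∈ l, 0 < k) (n d₁ d₂ : ℤ)
    (h : ((l.map genMat).prod)ᵀ * (l.map genMat).prod = !![d₁, n; n, d₂]) :
    n ^ 2 + 1 = d₁ * d₂ ∧ 1 ≤ d₁ ∧ d₁ ≤ n ∧ n < d₂ := by
  have hdet : d₁ * d₂ - n * n = 1 := by
    rw [← det_fin_two_of, ← h, det_transpose_mul_self,
      Int.isUnit_sq (isUnit_det_prod_map_genMat l)]
  have hbounds := (isColumnIncreasing_prod_map_genMat hne hpos).gram_bounds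
  simp only [h, of_apply, cons_val', cons_val_zero, cons_val_one, empty_val',
    cons_val_fin_one] at hbounds
  exact ⟨by linear_combination -hdet, hbounds⟩
end

section
/- For every triple of integers (n, d₁, d₂) with n ≥ 0, d₁ ≥ 1, d₂ ≥ 1, n² + 1 = d₁·d₂ and d₁ < d₂, there exists a unique nonempty finite sequence k₁, …, k_s of positive integers such that, setting M = A_{k₁}·A_{k₂}·⋯·A_{k_s}, one has Mᵀ·M = [[d₁, n], [n, d₂]]. -/
/-!
Appending `A_k` to a word `w` replaces the Gram matrix `[[a, b], [b, c]]` of `w` by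
`A_k [[a, b], [b, c]] A_k = [[c, b + c k], [b + c k, a + 2 b k + c k²]]`. Along words with
positive letters the invariant `1 ≤ a`, `0 ≤ b < c` persists, so the last letter and the Gram
matrix of the shorter word are recovered from `[[d₁, n], [n, d₂]]` by Euclidean division:
`k = n / d₁`, `b = n % d₁`. Since `A_k` is invertible, every step is forced, which gives
uniqueness; and the division turns a factorisation of `n² + 1` with `n > 0` into one of
`b² + 1` with `b < n`, which gives existence by induction on `n`.
-/

open Matrix

def wordGram (l : List ℤ) : Matrix (Fin 2) (Fin 2) ℤ :=
  ((l.map genMat).prod)ᵀ * (l.map genMat).prod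

lemma transpose_genMat (k : ℤ) : (genMat k)ᵀ = genMat k := by
  ext i j; fin_cases i <;> fin_cases j <;> rfl

lemma isUnit_genMat (k : ℤ) : IsUnit (genMat k) := by
  rw [isUnit_iff_isUnit_det, genMat, det_fin_two_of]
  simp

lemma genMat_mul_mul_genMat (k a b c : ℤ) :
    genMat k * !![a, b; b, c] * genMat k
      = !![c, b + c * k; b + c * k, a + 2 * b * k + c * k ^ 2] := by
  ext i j; fin_cases i <;> fin_cases j <;>
    simp [genMat, mul_apply, Fin.sum_univ_succ] <;> ring

lemma wordGram_nil : wordGram [] = 1 := by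
  simp [wordGram]

lemma wordGram_append_singleton (l : List ℤ) (k : ℤ) :
    wordGram (l ++ [k]) = genMat k * wordGram l * genMat k := by
  simp only [wordGram, List.map_append, List.map_singleton, List.prod_append,
    List.prod_singleton, transpose_mul, transpose_genMat, Matrix.mul_assoc]

lemma exists_wordGram_eq_of_forall_pos {l : List ℤ} (hl : ∀ k ∈ l, 0 < k) :
    ∃ a b c : ℤ, wordGram l = !![a, b; b, c] ∧ 1 ≤ a ∧ 0 ≤ b ∧ b < c ∧ (l ≠ [] → a ≤ b) := by
  induction l using List.reverseRecOn with
  | nil => exact ⟨1, 0, 1, by rw [wordGram_nil, one_fin_two], le_rfl, le_rfl, one_pos,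
      fun h => absurd rfl h⟩
  | append_singleton l k ih =>
    obtain ⟨a, b, c, hgram, ha, hb, hbc, -⟩ := ih fun x hx => hl x (by simp [hx])
    have hk : 0 < k := hl k (by simp)
    have hck : c ≤ c * k := le_mul_of_one_le_right (by omega) hk
    have hck2 : c * k ≤ c * k ^ 2 := by nlinarith
    refine ⟨c, b + c * k, a + 2 * b * k + c * k ^ 2, ?_, by omega, by omega, by nlinarith,
      fun _ => by omega⟩
    rw [wordGram_append_singleton, hgram, genMat_mul_mul_genMat]

lemma wordGram_ne_one_of_forall_pos {l : List ℤ} (hl : ∀ k ∈ l, 0 < k) (hne : l ≠ []) :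
    wordGram l ≠ 1 := by
  obtain ⟨a, b, c, hgram, ha, -, -, hab⟩ := exists_wordGram_eq_of_forall_pos hl
  rw [hgram, one_fin_two]
  intro h
  have : b = 0 := by simpa using congrFun (congrFun h 0) 1
  have := hab hne
  omega

lemma eq_of_add_mul_eq_add_mul {b₁ b₂ c k₁ k₂ : ℤ} (hb₁ : 0 ≤ b₁) (hb₁c : b₁ < c)
    (hb₂ : 0 ≤ b₂) (hb₂c : b₂ < c) (h : b₁ + c * k₁ = b₂ + c * k₂) : k₁ = k₂ := by
  have hc : c ≠ 0 := by omega
  have hdiv : ∀ b k, 0 ≤ b → b < c → (b + c * k) / c = k := fun b k hb hbc => by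
    rw [Int.add_mul_ediv_left _ _ hc, Int.ediv_eq_zero_of_lt hb hbc, zero_add]
  rw [← hdiv b₁ k₁ hb₁ hb₁c, h, hdiv b₂ k₂ hb₂ hb₂c]

theorem eq_of_wordGram_eq {l₁ l₂ : List ℤ} (hl₁ : ∀ k ∈ l₁, 0 < k)
    (hl₂ : ∀ k ∈ l₂, 0 < k) (h : wordGram l₁ = wordGram l₂) : l₁ = l₂ := by
  induction l₁ using List.reverseRecOn generalizing l₂ with
  | nil =>
    by_contra hne
    exact wordGram_ne_one_of_forall_pos hl₂ (Ne.symm hne) (h.symm.trans wordGram_nil)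
  | append_singleton m₁ k₁ ih =>
    rcases List.eq_nil_or_concat l₂ with rfl | ⟨m₂, k₂, rfl⟩
    · exact absurd (h.trans wordGram_nil) (wordGram_ne_one_of_forall_pos hl₁ (by simp))
    rw [List.concat_eq_append] at hl₂ h ⊢
    have hm₁ : ∀ k ∈ m₁, 0 < k := fun x hx => hl₁ x (by simp [hx])
    have hm₂ : ∀ k ∈ m₂, 0 < k := fun x hx => hl₂ x (by simp [hx])
    obtain ⟨a₁, b₁, c₁, hg₁, -, hb₁, hbc₁, -⟩ := exists_wordGram_eq_of_forall_pos hm₁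
    obtain ⟨a₂, b₂, c₂, hg₂, -, hb₂, hbc₂, -⟩ := exists_wordGram_eq_of_forall_pos hm₂
    have hk : k₁ = k₂ := by
      have h' := h
      rw [wordGram_append_singleton, wordGram_append_singleton, hg₁, hg₂,
        genMat_mul_mul_genMat, genMat_mul_mul_genMat] at h'
      have hc : c₁ = c₂ := by simpa using congrFun (congrFun h' 0) 0
      have hn : b₁ + c₁ * k₁ = b₂ + c₂ * k₂ := by simpa using congrFun (congrFun h' 0) 1
      subst hc
      exact eq_of_add_mul_eq_add_mul hb₁ hbc₁ hb₂ hbc₂ hn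
    subst hk
    rw [wordGram_append_singleton, wordGram_append_singleton] at h
    rw [ih hm₁ hm₂ (((isUnit_genMat k₁).mul_left_cancel
      ((isUnit_genMat k₁).mul_right_cancel h)))]

lemma exists_reduced_factorisation {n d₁ d₂ : ℤ} (hn : 0 < n) (hd₁ : 0 < d₁) (hle : d₁ ≤ d₂)
    (hfac : n ^ 2 + 1 = d₁ * d₂) :
    ∃ a b k : ℤ, 0 ≤ b ∧ b < n ∧ 0 < a ∧ a ≤ d₁ ∧ 0 < k ∧ b ^ 2 + 1 = a * d₁ ∧
      genMat k * !![a, b; b, d₁] * genMat k = !![d₁, n; n, d₂] := by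
  have hd₁n : d₁ ≤ n := by nlinarith
  set k := n / d₁
  set b := n % d₁
  have hdiv : b + d₁ * k = n := Int.emod_add_mul_ediv n d₁
  have hb : 0 ≤ b := Int.emod_nonneg n hd₁.ne'
  have hbd : b < d₁ := Int.emod_lt_of_pos n hd₁
  have hk : 0 < k := by nlinarith
  -- `a` is read off from the lower right entry `a + 2 b k + d₁ k²` of the step
  set a := d₂ - 2 * b * k - d₁ * k ^ 2
  have hfac' : b ^ 2 + 1 = a * d₁ := by linear_combination hfac + (b + d₁ * k + n) * hdiv
  have ha : 0 < a := by nlinarith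
  have had : a ≤ d₁ := by nlinarith
  refine ⟨a, b, k, hb, by omega, ha, had, hk, hfac', ?_⟩
  rw [genMat_mul_mul_genMat, hdiv]
  congr
  ring

theorem exists_forall_pos_wordGram_eq {n d₁ d₂ : ℤ} (hn : 0 ≤ n) (hd₁ : 0 < d₁) (hle : d₁ ≤ d₂)
    (hfac : n ^ 2 + 1 = d₁ * d₂) :
    ∃ l : List ℤ, (∀ k ∈ l, 0 < k) ∧ wordGram l = !![d₁, n; n, d₂] := by
  obtain ⟨N, rfl⟩ := Int.eq_ofNat_of_zero_le hn
  clear hn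
  induction N using Nat.strong_induction_on generalizing d₁ d₂ with
  | _ N ih =>
    rcases N.eq_zero_or_pos with rfl | hN
    · have hd : d₁ * d₂ = 1 := by simpa using hfac.symm
      obtain ⟨rfl, rfl⟩ : d₁ = 1 ∧ d₂ = 1 :=
        ⟨Int.eq_one_of_mul_eq_one_right hd₁.le hd, Int.eq_one_of_mul_eq_one_left (by omega) hd⟩
      exact ⟨[], by simp, by rw [wordGram_nil, one_fin_two]; rfl⟩
    obtain ⟨a, b, k, hb, hbN, ha, had, hk, hfac', hstep⟩ :=
      exists_reduced_factorisation (by omega) hd₁ hle hfac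
    obtain ⟨B, rfl⟩ := Int.eq_ofNat_of_zero_le hb
    obtain ⟨l, hl, hgram⟩ := ih B (by omega) ha had hfac'
    refine ⟨l ++ [k], fun x hx => ?_, by rw [wordGram_append_singleton, hgram, hstep]⟩
    rcases List.mem_append.mp hx with hx | hx
    · exact hl x hx
    · rwa [List.mem_singleton.mp hx]

theorem factorisation_unique_word_general (n d₁ d₂ : ℤ) (hn : 0 ≤ n)
    (hd₁ : 1 ≤ d₁) (hfac : n ^ 2 + 1 = d₁ * d₂) (hlt : d₁ < d₂) :
    ∃! l : List ℤ, l ≠ [] ∧ (∀ k ∈ l, 0 < k) ∧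
      ((l.map genMat).prod)ᵀ * (l.map genMat).prod = !![d₁, n; n, d₂] := by
  obtain ⟨l, hl, hgram⟩ := exists_forall_pos_wordGram_eq hn hd₁ hlt.le hfac
  refine ⟨l, ⟨?_, hl, hgram⟩, fun l' ⟨_, hl', hgram'⟩ =>
    eq_of_wordGram_eq hl' hl (hgram'.trans hgram.symm)⟩
  rintro rfl
  rw [wordGram_nil, one_fin_two] at hgram
  have h₁ : d₁ = 1 := by simpa using (congrFun (congrFun hgram 0) 0).symm
  have h₂ : d₂ = 1 := by simpa using (congrFun (congrFun hgram 1) 1).symm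
  omega

/-- Every factorisation `n² + 1 = d₁·d₂` with `0 ≤ n`, `1 ≤ d₁`,
`1 ≤ d₂` and `d₁ < d₂` comes from a unique nonempty finite sequence `k₁, …, k_s` of
positive integers with `(A_{k₁}⋯A_{k_s})ᵀ·(A_{k₁}⋯A_{k_s}) = [[d₁, n], [n, d₂]]`. -/
theorem factorisation_unique_word (n d₁ d₂ : ℤ) (hn : 0 ≤ n)
    (hd₁ : 1 ≤ d₁) (hd₂ : 1 ≤ d₂) (hfac : n ^ 2 + 1 = d₁ * d₂) (hlt : d₁ < d₂) :
    ∃! l : List ℤ, l ≠ [] ∧ (∀ k ∈ l, 0 < k) ∧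
      ((l.map genMat).prod)ᵀ * (l.map genMat).prod = !![d₁, n; n, d₂] :=
  factorisation_unique_word_general n d₁ d₂ hn hd₁ hfac hlt
end
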